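/- For all positive integers m and n, tₙ(1_m) = ((-1)^{m-1}/m) · ∑_{i=0}^{m-1} (-1)^i tₙ(1_i) tₙ(m-i), where tₙ(1_i) is the multiple t-harmonic sum with i ones and tₙ(k) = ∑_{j=1}^n 1/(2j-1)^k. -/

import Mathlib

/-!
`tharm k n` is the `k`-th elementary symmetric function and `tpow k n` the `k`-th power sum of
the numbers `1, 1/3, …, 1/(2n-1)`, so the recurrence is Newton's identity evaluated at them.
-/

open Finset

/-- Multiple t-harmonic sum with `k` ones: `tₙ(1_k) = ∑_{n ≥ n₁ > ⋯ > n_k ≥ 1} ∏ 1/(2n_j-1)`. -/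
noncomputable def tharm : ℕ → ℕ → ℝ
  | 0, _ => 1
  | (k+1), n => ∑ j ∈ Finset.Icc 1 n, (1 / (2 * (j : ℝ) - 1)) * tharm k (j - 1)

/-- `tₙ(k) = ∑_{j=1}^n 1/(2j-1)^k`. -/
noncomputable def tpow (k n : ℕ) : ℝ := ∑ j ∈ Finset.Icc 1 n, 1 / (2 * (j : ℝ) - 1) ^ k

theorem Finset.Nat.sum_antidiagonal_filter_fst_lt {M : Type*} [AddCommMonoid M] (k : ℕ)
    (f : ℕ × ℕ → M) : ∑ a ∈ antidiagonal k with a.1 < k, f a = ∑ i ∈ range k, f (i, k - i) := by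
  rw [sum_filter, Nat.sum_antidiagonal_eq_sum_range_succ_mk, sum_range_succ, if_neg (lt_irrefl k),
    add_zero]
  exact sum_congr rfl fun i hi => if_pos (mem_range.mp hi)

theorem Fintype.mul_esymm_eq_sum {σ R : Type*} [Fintype σ] [CommRing R] (f : σ → R) (k : ℕ) :
    k * (univ.val.map f).esymm k = (-1) ^ (k + 1) *
      ∑ i ∈ range k, (-1) ^ i * (univ.val.map f).esymm i * ∑ j, f j ^ (k - i) := by
  have h := congrArg (MvPolynomial.aeval f) (MvPolynomial.mul_esymm_eq_sum σ R k)
  simp only [map_mul, map_sum, map_pow, map_neg, map_one, map_natCast,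
    MvPolynomial.aeval_esymm_eq_multiset_esymm, MvPolynomial.psum, MvPolynomial.aeval_X] at h
  rwa [Nat.sum_antidiagonal_filter_fst_lt] at h

theorem Finset.mul_esymm_eq_sum {ι R : Type*} [CommRing R] (s : Finset ι) (f : ι → R) (k : ℕ) :
    k * (s.val.map f).esymm k = (-1) ^ (k + 1) *
      ∑ i ∈ range k, (-1) ^ i * (s.val.map f).esymm i * ∑ j ∈ s, f j ^ (k - i) := by
  have hval : (univ : Finset s).val.map (fun j : s => f j) = s.val.map f := by
    rw [univ_eq_attach, attach_val]
    exact Multiset.attach_map_val' s.val f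
  rw [← hval, Fintype.mul_esymm_eq_sum]
  refine congrArg _ (sum_congr rfl fun i _ => ?_)
  exact congrArg _ (sum_coe_sort s fun j => f j ^ (k - i))

theorem Multiset.esymm_cons_succ {R : Type*} [CommSemiring R] (a : R) (s : Multiset R) (k : ℕ) :
    (a ::ₘ s).esymm (k + 1) = s.esymm (k + 1) + a * s.esymm k := by
  simp [Multiset.esymm, Multiset.map_map, Multiset.sum_map_mul_left]

noncomputable def oddReciprocal (j : ℕ) : ℝ := 1 / (2 * j - 1)

theorem tharm_eq_esymm (k n : ℕ) : tharm k n = ((Icc 1 n).val.map oddReciprocal).esymm k := by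
  induction n generalizing k with
  | zero => cases k <;> simp [tharm, Multiset.esymm, Multiset.powersetCard_zero_right]
  | succ n ih =>
    cases k with
    | zero => simp [tharm, Multiset.esymm]
    | succ k =>
      rw [tharm, sum_Icc_succ_top (by omega), ← insert_Icc_right_eq_Icc_add_one (by omega),
        insert_val_of_notMem (by simp), Multiset.map_cons, Multiset.esymm_cons_succ, ← ih, ← ih,
        Nat.add_sub_cancel]
      rfl

theorem tpow_eq_sum_oddReciprocal_pow (k n : ℕ) :
    tpow k n = ∑ j ∈ Icc 1 n, oddReciprocal j ^ k := by
  simp [tpow, oddReciprocal]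

theorem tharm_recurrence_general (m n : ℕ) (hm : 1 ≤ m) :
    tharm m n = (-1) ^ (m - 1) / (m : ℝ) *
      ∑ i ∈ Finset.range m, (-1) ^ i * tharm i n * tpow (m - i) n := by
  have newton := (Icc 1 n).mul_esymm_eq_sum oddReciprocal m
  simp only [← tharm_eq_esymm, ← tpow_eq_sum_oddReciprocal_pow] at newton
  have hm0 : (m : ℝ) ≠ 0 := by positivity
  rw [div_mul_eq_mul_div, eq_div_iff hm0, mul_comm, newton,
    show m + 1 = m - 1 + 2 by omega, pow_add, neg_one_sq, mul_one]

theorem tharm_recurrence (m n : ℕ) (hm : 1 ≤ m) (hn : 1 ≤ n) :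
    tharm m n = (-1) ^ (m - 1) / (m : ℝ) *
      ∑ i ∈ Finset.range m, (-1) ^ i * tharm i n * tpow (m - i) n :=
  tharm_recurrence_general m n hm
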